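/- For every integer E with E ≡ 2 (mod 4) and E ≥ 6, (E/(E+2))·√2_E < √2, where √2_E is the truncated Catalan product. -/

import Mathlib

/-!
The partial products `P n = ∏_{k<n} (4k+2)²/((4k+1)(4k+3))` satisfy the Wallis-type identity
`P n ^ 2 * ((2n+1) W n) = W (2n) (4n+1)`, where `W` is Wallis' partial product for `π/2`; since
`W n → π/2`, this gives Catalan's product `P n → √2`. All factors exceed `1`, so `P n` increases
strictly and stays below `√2`. Finally `catalanTrunc E = P ((E-2)/4) · E/(E-1)`, and
`E/(E+2) · E/(E-1) ≤ 1` as soon as `E ≥ 2`.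
-/

open Finset Filter Topology Real

/-- The truncated Catalan product
`√2_E = (2²/(1·3))·(6²/(5·7))···((E-4)²/((E-5)(E-3)))·(E/(E-1))` for `E ≡ 2 (mod 4)`. -/
noncomputable def catalanTrunc (E : ℕ) : ℝ :=
  (∏ k ∈ Finset.range ((E - 2) / 4),
    (4 * (k : ℝ) + 2) ^ 2 / ((4 * k + 1) * (4 * k + 3))) * ((E : ℝ) / (E - 1))

noncomputable def catalanFactor (k : ℕ) : ℝ :=
  (4 * (k : ℝ) + 2) ^ 2 / ((4 * k + 1) * (4 * k + 3))

noncomputable def catalanProd (n : ℕ) : ℝ :=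
  ∏ k ∈ range n, catalanFactor k

lemma catalanProd_succ (n : ℕ) : catalanProd (n + 1) = catalanProd n * catalanFactor n :=
  prod_range_succ _ _

lemma catalanFactor_pos (k : ℕ) : 0 < catalanFactor k := by
  unfold catalanFactor
  positivity

lemma one_lt_catalanFactor (k : ℕ) : 1 < catalanFactor k := by
  rw [catalanFactor, one_lt_div (by positivity)]
  nlinarith

lemma catalanProd_pos (n : ℕ) : 0 < catalanProd n :=
  prod_pos fun k _ => catalanFactor_pos k

lemma strictMono_catalanProd : StrictMono catalanProd :=
  strictMono_nat_of_lt_succ fun n => by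
    rw [catalanProd_succ]
    exact lt_mul_of_one_lt_right (catalanProd_pos n) (one_lt_catalanFactor n)

lemma catalanProd_sq_mul_wallis (n : ℕ) :
    catalanProd n ^ 2 * ((2 * n + 1) * Wallis.W n) = Wallis.W (2 * n) * (4 * n + 1) := by
  induction n with
  | zero => simp [catalanProd, Wallis.W]
  | succ n ih =>
    rw [show 2 * (n + 1) = 2 * n + 1 + 1 by ring, Wallis.W_succ, Wallis.W_succ, Wallis.W_succ,
      catalanProd_succ, catalanFactor]
    have hW : Wallis.W (2 * n) = catalanProd n ^ 2 * ((2 * n + 1) * Wallis.W n) / (4 * n + 1) := by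
      rw [ih]; field_simp
    rw [hW]
    push_cast
    field_simp
    ring

lemma tendsto_catalanProd_sq : Tendsto (fun n => catalanProd n ^ 2) atTop (𝓝 2) := by
  have hWallis : Tendsto (fun n => Wallis.W (2 * n) / Wallis.W n) atTop (𝓝 1) := by
    have hW2 := Wallis.tendsto_W_nhds_pi_div_two.comp (tendsto_id.const_mul_atTop' two_pos)
    have h := hW2.div Wallis.tendsto_W_nhds_pi_div_two (by positivity)
    rwa [div_self (by positivity)] at h
  have hratio : Tendsto (fun n : ℕ => 2 - 1 / (2 * (n : ℝ) + 1)) atTop (𝓝 2) := by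
    have := tendsto_one_div_add_atTop_nhds_zero_nat (𝕜 := ℝ) |>.comp
      (tendsto_id.const_mul_atTop' two_pos)
    simpa using this.const_sub (2 : ℝ)
  have h := hWallis.mul hratio
  rw [one_mul] at h
  refine h.congr fun n => ?_
  have := Wallis.W_pos n
  field_simp
  linear_combination -catalanProd_sq_mul_wallis n

lemma tendsto_catalanProd : Tendsto catalanProd atTop (𝓝 (√2)) := by
  refine tendsto_catalanProd_sq.sqrt.congr fun n => ?_
  exact sqrt_sq (catalanProd_pos n).le

lemma catalanProd_lt_sqrt_two (n : ℕ) : catalanProd n < √2 :=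
  (strictMono_catalanProd n.lt_succ_self).trans_le
    (strictMono_catalanProd.monotone.ge_of_tendsto tendsto_catalanProd _)

lemma div_add_two_mul_div_sub_one_le_one {x : ℝ} (hx : 2 ≤ x) :
    x / (x + 2) * (x / (x - 1)) ≤ 1 := by
  rw [div_mul_div_comm, div_le_one (by nlinarith)]
  nlinarith

theorem catalan_trunc_lower_general (E : ℕ) (hE : E % 4 = 2) :
    ((E : ℝ) / (E + 2)) * catalanTrunc E < Real.sqrt 2 := by
  have hE2 : (2 : ℝ) ≤ E := by exact_mod_cast (show 2 ≤ E by omega)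
  have htrunc : catalanTrunc E = catalanProd ((E - 2) / 4) * (E / (E - 1)) := rfl
  calc ((E : ℝ) / (E + 2)) * catalanTrunc E
      = catalanProd ((E - 2) / 4) * ((E / (E + 2)) * (E / (E - 1))) := by rw [htrunc]; ring
    _ ≤ catalanProd ((E - 2) / 4) * 1 :=
      mul_le_mul_of_nonneg_left (div_add_two_mul_div_sub_one_le_one hE2)
        (catalanProd_pos _).le
    _ < √2 := by rw [mul_one]; exact catalanProd_lt_sqrt_two _

theorem catalan_trunc_lower (E : ℕ) (hE : E % 4 = 2) (hE6 : 6 ≤ E) :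
    ((E : ℝ) / (E + 2)) * catalanTrunc E < Real.sqrt 2 :=
  catalan_trunc_lower_general E hE
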